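/- Let n ≥ 1, let X₁,…,X_n be sets, and let k : ∏_{i=1}^n Xᵢ → ℝⁿ. Under the canonical bijection Σ(⊙_{i=1}^n D^Δ_{X₁,…,Xᵢ}) ≅ ∏_{i=1}^n (∏_{j<i} Xⱼ → Xᵢ), a strategy profile σ is a state of the iterated composite ⊙_{i=1}^n D^Δ_{X₁,…,Xᵢ} : I ⇸ (∏ᵢ Xᵢ, ℝⁿ) over k if and only if σ is a pure Nash equilibrium of the n-player sequential game with payoff function k, i.e., iff for every 1 ≤ i ≤ n and every xᵢ ∈ Xᵢ, k(v^σ)ᵢ ≥ k(v^σ_{(v^σ)₁,…,(v^σ)_{i-1}, xᵢ})ᵢ. -/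

import Mathlib

/-- A lens between 'disets' `(X, S)` and `(Y, R)`: a view function `X → Y` and
an update function `X × R → S`. -/
structure Lens (X S Y R : Type) where
  v : X → Y
  u : X → R → S

namespace Lens

/-- The identity lens on the diset `(X, S)`. -/
def id (X S : Type) : Lens X S X S := ⟨fun x => x, fun _ s => s⟩

/-- Composition of lenses: `m.comp l` is "first `l`, then `m`". -/
def comp {X S Y R Z Q : Type} (m : Lens Y R Z Q) (l : Lens X S Y R) : Lens X S Z Q :=
  ⟨fun x => m.v (l.v x), fun x q => l.u x (m.u (l.v x) q)⟩

theorem comp_assoc {X S Y R Z Q W T : Type} (c : Lens Z Q W T) (b : Lens Y R Z Q)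
    (a : Lens X S Y R) : (c.comp b).comp a = c.comp (b.comp a) := rfl

/-- The action of the continuation functor `K` on a lens. -/
def K {X S Y R : Type} (l : Lens X S Y R) (k : Y → R) : X → S :=
  fun x => l.u x (k (l.v x))

theorem K_comp {X S Y R Z Q : Type} (m : Lens Y R Z Q) (l : Lens X S Y R) (k : Z → Q) :
    (m.comp l).K k = l.K (m.K k) := rfl

/-- The tensor (monoidal product) of lenses. -/
def tensor {X S Y R X' S' Y' R' : Type} (l : Lens X S Y R) (l' : Lens X' S' Y' R') :
    Lens (X × X') (S × S') (Y × Y') (R × R') :=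
  ⟨fun p => (l.v p.1, l'.v p.2), fun p r => (l.u p.1 r.1, l'.u p.2 r.2)⟩

end Lens

/-- An open game `G : (X,S) ⇸ (Y,R)`: a set of strategy profiles, a lens for each
strategy profile, and a best-response relation for each context `(h, k)`. -/
structure OpenGame (X S Y R : Type) where
  Strat : Type
  play : Strat → Lens X S Y R
  B : X → (Y → R) → Strat → Strat → Prop

namespace OpenGame

/-- A state of an open game over a continuation `k`: a strategy profile `σ` with
`(σ,σ) ∈ B(h,k)` for every history `h`. -/
def IsState {X S Y R : Type} (G : OpenGame X S Y R) (σ : G.Strat) (k : Y → R) : Prop :=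
  ∀ h : X, G.B h k σ σ

/-- Sequential composition `H ⊙ G` of open games. -/
def seq {X S Y R Z Q : Type} (G : OpenGame X S Y R) (H : OpenGame Y R Z Q) :
    OpenGame X S Z Q where
  Strat := G.Strat × H.Strat
  play := fun p => (H.play p.2).comp (G.play p.1)
  B := fun h k p p' =>
    G.B h ((H.play p.2).K k) p.1 p'.1 ∧ H.B ((G.play p.1).v h) k p.2 p'.2

/-- Tensor (simultaneous play) `G₁ ⊗ G₂` of open games. -/
def tensor {X₁ S₁ Y₁ R₁ X₂ S₂ Y₂ R₂ : Type}
    (G₁ : OpenGame X₁ S₁ Y₁ R₁) (G₂ : OpenGame X₂ S₂ Y₂ R₂) :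
    OpenGame (X₁ × X₂) (S₁ × S₂) (Y₁ × Y₂) (R₁ × R₂) where
  Strat := G₁.Strat × G₂.Strat
  play := fun p => (G₁.play p.1).tensor (G₂.play p.2)
  B := fun h k p p' =>
    G₁.B h.1 (fun y => (k (y, (G₂.play p.2).v h.2)).1) p.1 p'.1 ∧
    G₂.B h.2 (fun y' => (k ((G₁.play p.1).v h.1, y')).2) p.2 p'.2

end OpenGame

/-- A (contravariant lens) morphism of open games `α : G → G'`: lenses
`s(α) : Φ' → Φ` and `t(α) : Ψ' → Ψ` and a map on strategy profiles, such that plays are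
intertwined and best responses are preserved. -/
structure OGMor {X S Y R X' S' Y' R' : Type}
    (G : OpenGame X S Y R) (G' : OpenGame X' S' Y' R') where
  s : Lens X' S' X S
  t : Lens Y' R' Y R
  f : G.Strat → G'.Strat
  comm : ∀ σ, (G.play σ).comp s = t.comp (G'.play (f σ))
  best : ∀ h k σ σ', G.B (s.v h) k σ σ' → G'.B h (t.K k) (f σ) (f σ')

/-- Vertical composition of morphisms of open games. -/
def OGMor.vcomp {X S Y R X' S' Y' R' X'' S'' Y'' R'' : Type}
    {G : OpenGame X S Y R} {G' : OpenGame X' S' Y' R'} {G'' : OpenGame X'' S'' Y'' R''}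
    (β : OGMor G' G'') (α : OGMor G G') : OGMor G G'' where
  s := α.s.comp β.s
  t := α.t.comp β.t
  f := β.f ∘ α.f
  comm := by
    intro σ
    show _ = (α.t.comp β.t).comp (G''.play (β.f (α.f σ)))
    rw [← Lens.comp_assoc, α.comm, Lens.comp_assoc, β.comm, ← Lens.comp_assoc]
  best := by
    intro h k σ σ' hB
    exact β.best h (α.t.K k) _ _ (α.best (β.s.v h) k σ σ' hB)

/-- Strategy profiles of an `n`-player sequential game with choice sets `X i`:
for each `i`, a function `∏_{j<i} X j → X i`. -/
def SeqStrat (n : ℕ) (X : Fin n → Type) : Type :=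
  ∀ i : Fin n, ((∀ j : Fin i.val, X (Fin.castLT j (j.isLt.trans i.isLt))) → X i)

/-- The strategic extension `v^σ` (auxiliary version, by course-of-values recursion). -/
def extendAux {n : ℕ} {X : Fin n → Type} (σ : SeqStrat n X) :
    (m : ℕ) → (h : m < n) → X ⟨m, h⟩
  | m, h => σ ⟨m, h⟩ (fun j => extendAux σ j.val (j.isLt.trans h))
  termination_by m _ => m

/-- The strategic extension `v^σ` of the empty play: the play in which every player `i`
follows the strategy `σ i`. -/
def extendPlay {n : ℕ} {X : Fin n → Type} (σ : SeqStrat n X) : ∀ i : Fin n, X i :=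
  fun i => extendAux σ i.val i.isLt

/-- The strategic extension `v^σ_{x, xi}` of the partial play `(x, xi)`, where `x` is a
partial play of length `i` and `xi` is the move played at position `i`; all later moves
follow `σ` (auxiliary version). -/
def deviateAux {n : ℕ} {X : Fin n → Type} (σ : SeqStrat n X) (i : Fin n)
    (x : ∀ j : Fin i.val, X (Fin.castLT j (j.isLt.trans i.isLt))) (xi : X i) :
    (m : ℕ) → (h : m < n) → X ⟨m, h⟩
  | m, h =>
    if hm : m < i.val then x ⟨m, hm⟩
    else if hm' : m = i.val then
      cast (congrArg X (show i = (⟨m, h⟩ : Fin n) from Fin.ext hm'.symm)) xi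
    else σ ⟨m, h⟩ (fun j => deviateAux σ i x xi j.val (j.isLt.trans h))
  termination_by m _ => m

/-- The strategic extension `v^σ_{x, xi}`. -/
def deviatePlay {n : ℕ} {X : Fin n → Type} (σ : SeqStrat n X) (i : Fin n)
    (x : ∀ j : Fin i.val, X (Fin.castLT j (j.isLt.trans i.isLt))) (xi : X i) :
    ∀ l : Fin n, X l :=
  fun l => deviateAux σ i x xi l.val l.isLt

/-- The open game `D^Δ_{X₁,…,X_{n+1}} : (∏_{i≤n} X i, ℝⁿ) ⇸ (∏_{i≤n+1} X i, ℝ^{n+1})`: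
the decision of player `n+1`, who observes the previous `n` moves, copies them forward,
and maximises the `(n+1)`-st payoff. -/
def DDelta (n : ℕ) (X : Fin (n + 1) → Type) :
    OpenGame (∀ i : Fin n, X i.castSucc) (Fin n → ℝ)
      (∀ i : Fin (n + 1), X i) (Fin (n + 1) → ℝ) where
  Strat := (∀ i : Fin n, X i.castSucc) → X (Fin.last n)
  play := fun σ => ⟨fun x => Fin.snoc x (σ x), fun _ r => fun i => r i.castSucc⟩
  B := fun h k _ σ'' => ∀ xn : X (Fin.last n),
    k (Fin.snoc h (σ'' h)) (Fin.last n) ≥ k (Fin.snoc h xn) (Fin.last n)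

/-- The canonical bijection between strategy profiles of
`(⊙_{i=1}^n D^Δ) ⊙ D^Δ_{X₁,…,X_{n+1}}` and sequential strategy profiles. -/
def snocStratEquiv {n : ℕ} (X : Fin (n + 1) → Type) :
    (SeqStrat n (fun i => X i.castSucc) ×
      ((∀ i : Fin n, X i.castSucc) → X (Fin.last n))) ≃ SeqStrat (n + 1) X where
  toFun p i :=
    Fin.lastCases
      (motive := fun i => (∀ j : Fin i.val, X (Fin.castLT j (j.isLt.trans i.isLt))) → X i)
      p.2 p.1 i
  invFun σ := (fun j => σ j.castSucc, σ (Fin.last n))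
  left_inv p := by
    obtain ⟨a, b⟩ := p
    refine Prod.ext ?_ ?_
    · funext j
      exact Fin.lastCases_castSucc (motive := fun i => (∀ j : Fin i.val, X (Fin.castLT j (j.isLt.trans i.isLt))) → X i) (last := b) (cast := a) j
    · exact Fin.lastCases_last (motive := fun i => (∀ j : Fin i.val, X (Fin.castLT j (j.isLt.trans i.isLt))) → X i) (last := b) (cast := a)
  right_inv σ := by
    funext i
    induction i using Fin.lastCases with
    | last => simp
    | cast j => simp

/-- The iterated sequential composite `⊙_{i=1}^n D^Δ_{X₁,…,X_i} : I ⇸ (∏ i, X i, ℝⁿ)`,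
built by recursion using the sequential composition `⊙` of open games, together with the
canonical bijection of its strategy profiles with `∏_{i=1}^n (∏_{j<i} X j → X i)`. -/
def seqAux : (n : ℕ) → (X : Fin n → Type) →
    (G : OpenGame PUnit PUnit (∀ i, X i) (Fin n → ℝ)) ×' (G.Strat ≃ SeqStrat n X)
  | 0, X =>
    ⟨{ Strat := PUnit
       play := fun _ => ⟨fun _ => (fun i => i.elim0), fun _ _ => PUnit.unit⟩
       B := fun _ _ _ _ => True },
     (Equiv.ofUnique PUnit (∀ i : Fin 0, ((∀ j : Fin i.val, X (Fin.castLT j (j.isLt.trans i.isLt))) → X i)) : PUnit ≃ SeqStrat 0 X)⟩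
  | n + 1, X =>
    let p := seqAux n (fun i => X i.castSucc)
    ⟨p.1.seq (DDelta n X),
     (p.2.prodCongr (Equiv.refl _)).trans (snocStratEquiv X)⟩

/-
Induct on the number of players. A state of `G ⊙ H` over `k` is a state of `G` over the
continuation `K(H)(k)` together with a best response of `H` on the play produced by `G`.
For `H = D^Δ` the continuation `K(D^Δ)(k)` is the payoff of the first `n` players when the
last one answers by `σ_{n+1}`, and the best response is the equilibrium condition of player
`n+1`; both sides of the equivalence split in the same way because the strategic extensions
for `σ` are those for its restriction to the first `n` players, extended by the last move.
-/

namespace OpenGame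

theorem isState_seq_iff {X S Y R Z Q : Type} (G : OpenGame X S Y R) (H : OpenGame Y R Z Q)
    (σ : G.Strat) (τ : H.Strat) (k : Z → Q) :
    (G.seq H).IsState (σ, τ) k ↔
      G.IsState σ ((H.play τ).K k) ∧ ∀ h, H.B ((G.play σ).v h) k τ τ :=
  forall_and

end OpenGame

def SeqStrat.init {n : ℕ} {X : Fin (n + 1) → Type} (σ : SeqStrat (n + 1) X) :
    SeqStrat n (fun i => X i.castSucc) :=
  fun j => σ j.castSucc

def IsNashEquilibrium {n : ℕ} {X : Fin n → Type} (k : (∀ i, X i) → (Fin n → ℝ))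
    (σ : SeqStrat n X) : Prop :=
  ∀ (i : Fin n) (xi : X i),
    k (extendPlay σ) i ≥
      k (deviatePlay σ i (fun j => extendPlay σ (Fin.castLT j (j.isLt.trans i.isLt))) xi) i

section Extension

variable {n : ℕ} {X : Fin (n + 1) → Type} (σ : SeqStrat (n + 1) X)

theorem extendAux_init (m : ℕ) (h : m < n) :
    extendAux σ.init m h = extendAux σ m (h.trans n.lt_succ_self) := by
  induction m using Nat.strong_induction_on with
  | _ m IH =>
    rw [extendAux, extendAux]
    exact congrArg (σ _) (funext fun j => IH j j.isLt (j.isLt.trans h))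

theorem extendPlay_init (j : Fin n) : extendPlay σ.init j = extendPlay σ j.castSucc :=
  extendAux_init σ j j.isLt

theorem extendPlay_eq_snoc :
    extendPlay σ = Fin.snoc (extendPlay σ.init) (σ (Fin.last n) (extendPlay σ.init)) := by
  funext l
  induction l using Fin.lastCases with
  | last =>
    rw [Fin.snoc_last]
    show extendAux σ n n.lt_succ_self = _
    rw [extendAux]
    exact congrArg (σ _) (funext fun j => (extendPlay_init σ j).symm)
  | cast j => rw [Fin.snoc_castSucc, extendPlay_init]

theorem deviateAux_init (i : Fin n)
    (x : ∀ j : Fin i.val, X (Fin.castLT j (j.isLt.trans i.castSucc.isLt))) (xi : X i.castSucc)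
    (m : ℕ) (h : m < n) :
    deviateAux σ.init i x xi m h = deviateAux σ i.castSucc x xi m (h.trans n.lt_succ_self) := by
  induction m using Nat.strong_induction_on with
  | _ m IH =>
    rw [deviateAux, deviateAux]
    by_cases hlt : m < i.val
    · simp [hlt]
    by_cases heq : m = i.val
    · simp [heq]
    simp only [Fin.val_castSucc, hlt, heq, dite_false]
    exact congrArg (σ _) (funext fun j => IH j j.isLt (j.isLt.trans h))

theorem deviatePlay_castSucc_eq_snoc (i : Fin n)
    (x : ∀ j : Fin i.val, X (Fin.castLT j (j.isLt.trans i.castSucc.isLt))) (xi : X i.castSucc) :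
    deviatePlay σ i.castSucc x xi =
      Fin.snoc (deviatePlay σ.init i x xi) (σ (Fin.last n) (deviatePlay σ.init i x xi)) := by
  funext l
  induction l using Fin.lastCases with
  | last =>
    rw [Fin.snoc_last]
    show deviateAux σ i.castSucc x xi n n.lt_succ_self = _
    rw [deviateAux, dif_neg (by simp), dif_neg (by simpa using i.isLt.ne')]
    exact congrArg (σ _) (funext fun j => (deviateAux_init σ i x xi j j.isLt).symm)
  | cast j =>
    rw [Fin.snoc_castSucc]
    exact (deviateAux_init σ i x xi j j.isLt).symm

theorem deviatePlay_last_eq_snoc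
    (x : ∀ j : Fin n, X (Fin.castLT j (j.isLt.trans (Fin.last n).isLt))) (xn : X (Fin.last n)) :
    deviatePlay σ (Fin.last n) x xn = Fin.snoc x xn := by
  funext l
  induction l using Fin.lastCases with
  | last =>
    rw [Fin.snoc_last]
    show deviateAux σ (Fin.last n) x xn n n.lt_succ_self = xn
    rw [deviateAux, dif_neg (show ¬ n < (Fin.last n).val from lt_irrefl n),
      dif_pos (show n = (Fin.last n).val from rfl)]
    rfl
  | cast j =>
    rw [Fin.snoc_castSucc]
    show deviateAux σ (Fin.last n) x xn j j.castSucc.isLt = x j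
    rw [deviateAux, dif_pos (show j.val < (Fin.last n).val from j.isLt)]
    rfl

end Extension

theorem isNashEquilibrium_succ_iff {n : ℕ} {X : Fin (n + 1) → Type}
    (k : (∀ i, X i) → (Fin (n + 1) → ℝ)) (σ : SeqStrat (n + 1) X) :
    IsNashEquilibrium k σ ↔
      IsNashEquilibrium (fun y i => k (Fin.snoc y (σ (Fin.last n) y)) i.castSucc) σ.init ∧
        ∀ xn, k (Fin.snoc (extendPlay σ.init) (σ (Fin.last n) (extendPlay σ.init))) (Fin.last n) ≥
          k (Fin.snoc (extendPlay σ.init) xn) (Fin.last n) := by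
  have hpath (j : Fin (n + 1)) (hj : j.val ≤ n) :
      (fun l : Fin j.val => extendPlay σ (Fin.castLT l (l.isLt.trans j.isLt))) =
        fun l => extendPlay σ.init (Fin.castLT l (l.isLt.trans_le hj)) :=
    funext fun l => (extendPlay_init σ (Fin.castLT l (l.isLt.trans_le hj))).symm
  unfold IsNashEquilibrium
  rw [Fin.forall_fin_succ']
  refine and_congr (forall₂_congr fun j xi => ?_) (forall_congr' fun xn => ?_)
  · rw [hpath j.castSucc j.isLt.le, deviatePlay_castSucc_eq_snoc, extendPlay_eq_snoc]
    rfl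
  · rw [hpath (Fin.last n) le_rfl, deviatePlay_last_eq_snoc, extendPlay_eq_snoc]
    rfl

theorem seqAux_play_v (n : ℕ) (X : Fin n → Type) (σ : SeqStrat n X) (h : PUnit) :
    ((seqAux n X).1.play ((seqAux n X).2.symm σ)).v h = extendPlay σ := by
  induction n with
  | zero => exact funext fun i => i.elim0
  | succ n IH =>
    show Fin.snoc _ _ = _
    rw [extendPlay_eq_snoc]
    exact congrArg₂ (fun y z => Fin.snoc y z) (IH _ σ.init) (congrArg (σ _) (IH _ σ.init))

theorem isState_seqAux_iff (n : ℕ) (X : Fin n → Type) (k : (∀ i, X i) → (Fin n → ℝ))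
    (σ : SeqStrat n X) :
    (seqAux n X).1.IsState ((seqAux n X).2.symm σ) k ↔ IsNashEquilibrium k σ := by
  induction n with
  | zero => exact ⟨fun _ i => i.elim0, fun _ _ => trivial⟩
  | succ n IH =>
    rw [isNashEquilibrium_succ_iff, ← IH]
    show ((seqAux n _).1.seq (DDelta n X)).IsState
      ((seqAux n _).2.symm σ.init, σ (Fin.last n)) k ↔ _
    refine (OpenGame.isState_seq_iff _ _ _ _ _).trans (and_congr Iff.rfl ?_)
    simp only [seqAux_play_v]
    exact ⟨fun hB => hB PUnit.unit, fun hB _ => hB⟩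

theorem states_of_seq_composite_are_nash_equilibria_general
    (n : ℕ) (X : Fin n → Type)
    (k : (∀ i, X i) → (Fin n → ℝ)) (σ : SeqStrat n X) :
    (seqAux n X).1.IsState ((seqAux n X).2.symm σ) k ↔
      ∀ (i : Fin n) (xi : X i),
        k (extendPlay σ) i ≥
          k (deviatePlay σ i (fun j => extendPlay σ (Fin.castLT j (j.isLt.trans i.isLt))) xi) i :=
  isState_seqAux_iff n X k σ

/-- Let `n ≥ 1`, let `X₁,…,X_n` be sets and `k : ∏ i, X i → ℝⁿ`. Under the canonical
bijection of strategy profiles, `σ` is a state of the iterated composite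
`⊙_{i=1}^n D^Δ_{X₁,…,X_i} : I ⇸ (∏ i, X i, ℝⁿ)` over `k` if and only if `σ` is a pure
Nash equilibrium of the `n`-player sequential game with payoff function `k`: for every
player `i` and deviation `x_i`, `k(v^σ)_i ≥ k(v^σ_{(v^σ)_1,…,(v^σ)_{i-1}, x_i})_i`. -/
theorem states_of_seq_composite_are_nash_equilibria
    (n : ℕ) (hn : 1 ≤ n) (X : Fin n → Type)
    (k : (∀ i, X i) → (Fin n → ℝ)) (σ : SeqStrat n X) :
    (seqAux n X).1.IsState ((seqAux n X).2.symm σ) k ↔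
      ∀ (i : Fin n) (xi : X i),
        k (extendPlay σ) i ≥
          k (deviatePlay σ i (fun j => extendPlay σ (Fin.castLT j (j.isLt.trans i.isLt))) xi) i :=
  states_of_seq_composite_are_nash_equilibria_general n X k σ
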